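/- arXiv:2504.14281 — 2 statements merged into one kernel-verified Lean document; each statement's English description precedes it below -/
import Mathlib

section
/- Let B_i = I_τ ⊗ (a_i a_i^H) for steering vectors a_i ∈ ℂ^N, let Ω = diag(e^{jφ₁},…,e^{jφ_τ}) and P = Ω ⊗ I_N, and let x̃ = P x. Then for each k, B_k x̃ = P B_k x and C_k(x̃) = P C_k(x) P^H, where C_k(x) = Σ_{i≠k} σ_i² B_i x x^H B_i^H + σ_r² I. Consequently the SINR f_k(x) = σ_k² x^H B_k^H C_k(x)^{-1} B_k x satisfies f_k(x̃) = f_k(x). -/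
open Matrix Kronecker BigOperators ComplexOrder

noncomputable section

/-- `B_i = I_τ ⊗ (a_i a_i^H)`. -/
def Bmat (τ : ℕ) {N : ℕ} (a : Fin N → ℂ) : Matrix (Fin τ × Fin N) (Fin τ × Fin N) ℂ :=
  (1 : Matrix (Fin τ) (Fin τ) ℂ) ⊗ₖ vecMulVec a (star a)

/-- `P = Ω ⊗ I_N` with `Ω = diag(e^{jφ₁},…,e^{jφ_τ})`. -/
def Pmat (N : ℕ) {τ : ℕ} (φ : Fin τ → ℝ) : Matrix (Fin τ × Fin N) (Fin τ × Fin N) ℂ :=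
  (Matrix.diagonal fun t => Complex.exp (Complex.I * φ t)) ⊗ₖ (1 : Matrix (Fin N) (Fin N) ℂ)

/-- `C_k(x) = Σ_{i≠k} σ_i² B_i x x^H B_i^H + σ_r² I`. -/
def Cmat {L N τ : ℕ} (a : Fin L → Fin N → ℂ) (σ : Fin L → ℝ) (σr : ℝ) (k : Fin L)
    (x : Fin τ × Fin N → ℂ) : Matrix (Fin τ × Fin N) (Fin τ × Fin N) ℂ :=
  (∑ i ∈ Finset.univ.erase k,
      ((σ i : ℂ) ^ 2) • vecMulVec ((Bmat τ (a i)).mulVec x) (star ((Bmat τ (a i)).mulVec x)))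
    + ((σr : ℂ) ^ 2) • 1

/-- `f_k(x) = σ_k² x^H B_k^H C_k(x)⁻¹ B_k x`. -/
def fSINR {L N τ : ℕ} (a : Fin L → Fin N → ℂ) (σ : Fin L → ℝ) (σr : ℝ) (k : Fin L)
    (x : Fin τ × Fin N → ℂ) : ℂ :=
  ((σ k : ℂ) ^ 2) *
    (star ((Bmat τ (a k)).mulVec x) ⬝ᵥ (Cmat a σ σr k x)⁻¹.mulVec ((Bmat τ (a k)).mulVec x))

lemma Pdiag (N : ℕ) {τ : ℕ} (φ : Fin τ → ℝ) :
    Pmat N φ = Matrix.diagonal (fun p : Fin τ × Fin N => Complex.exp (Complex.I * φ p.1)) := by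
  rw [Pmat, ← Matrix.diagonal_one, Matrix.diagonal_kronecker_diagonal]
  simp

lemma unitentry {τ : ℕ} (φ : Fin τ → ℝ) (t : Fin τ) :
    Complex.exp (Complex.I * φ t) * star (Complex.exp (Complex.I * φ t)) = 1 := by
  rw [RCLike.star_def, ← Complex.exp_conj, ← Complex.exp_add]
  simp [Complex.conj_I, Complex.conj_ofReal]

lemma PPH (N : ℕ) {τ : ℕ} (φ : Fin τ → ℝ) : Pmat N φ * (Pmat N φ)ᴴ = 1 := by
  rw [Pdiag, Matrix.diagonal_conjTranspose, Matrix.diagonal_mul_diagonal]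
  have h : (fun i : Fin τ × Fin N => Complex.exp (Complex.I * φ i.1)
      * star (fun p : Fin τ × Fin N => Complex.exp (Complex.I * φ p.1)) i)
      = fun _ => (1 : ℂ) := funext fun p => by simpa using unitentry φ p.1
  rw [h, Matrix.diagonal_one]

lemma PHP (N : ℕ) {τ : ℕ} (φ : Fin τ → ℝ) : (Pmat N φ)ᴴ * Pmat N φ = 1 := by
  rw [Pdiag, Matrix.diagonal_conjTranspose, Matrix.diagonal_mul_diagonal]
  have h : (fun i : Fin τ × Fin N => star (fun p : Fin τ × Fin N => Complex.exp (Complex.I * φ p.1)) i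
      * Complex.exp (Complex.I * φ i.1))
      = fun _ => (1 : ℂ) := funext fun p => by simpa [mul_comm] using unitentry φ p.1
  rw [h, Matrix.diagonal_one]

lemma Pinv (N : ℕ) {τ : ℕ} (φ : Fin τ → ℝ) : (Pmat N φ)⁻¹ = (Pmat N φ)ᴴ :=
  Matrix.inv_eq_right_inv (PPH N φ)

lemma PHinv (N : ℕ) {τ : ℕ} (φ : Fin τ → ℝ) : ((Pmat N φ)ᴴ)⁻¹ = Pmat N φ :=
  Matrix.inv_eq_right_inv (PHP N φ)

lemma BPcomm {N τ : ℕ} (a : Fin N → ℂ) (φ : Fin τ → ℝ) :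
    Bmat τ a * Pmat N φ = Pmat N φ * Bmat τ a := by
  ext ⟨t, n⟩ ⟨s, m⟩
  rw [Pdiag]
  rw [Matrix.mul_diagonal, Matrix.diagonal_mul]
  simp only [Bmat, kroneckerMap_apply]
  rcases eq_or_ne t s with h | h
  · subst h; ring
  · simp [Matrix.one_apply_ne h]

lemma PvecMulVec {N τ : ℕ} (φ : Fin τ → ℝ) (u : Fin τ × Fin N → ℂ) :
    vecMulVec ((Pmat N φ).mulVec u) (star ((Pmat N φ).mulVec u))
      = Pmat N φ * vecMulVec u (star u) * (Pmat N φ)ᴴ := by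
  ext i j
  rw [Pdiag, Matrix.diagonal_conjTranspose]
  simp only [vecMulVec_apply, Matrix.mulVec_diagonal, Pi.star_apply,
    Matrix.mul_diagonal, Matrix.diagonal_mul, star_mul']
  ring

lemma keyquad {n : Type*} [Fintype n] [DecidableEq n] (P A : Matrix n n ℂ)
    (hP : Pᴴ * P = 1) (u : n → ℂ) :
    star (P.mulVec u) ⬝ᵥ (P * A * Pᴴ).mulVec (P.mulVec u) = star u ⬝ᵥ A.mulVec u := by
  rw [Matrix.star_mulVec, Matrix.mulVec_mulVec, ← Matrix.dotProduct_mulVec,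
    Matrix.mulVec_mulVec]
  congr 1
  have h1 : Pᴴ * (P * A * Pᴴ * P) = (Pᴴ * P) * A * (Pᴴ * P) := by noncomm_ring
  rw [h1, hP, Matrix.one_mul, Matrix.mul_one]

/-- Symmetric-rotation invariance of the radar SINR: with `x̃ = (Ω ⊗ I_N)x`, one has
`B_k x̃ = P B_k x`, `C_k(x̃) = P C_k(x) P^H`, and `f_k(x̃) = f_k(x)`. -/
theorem stmt_8 (L N τ : ℕ) (a : Fin L → Fin N → ℂ) (σ : Fin L → ℝ) (σr : ℝ)
    (hσ : ∀ i, 0 < σ i) (hσr : 0 < σr) (φ : Fin τ → ℝ) (k : Fin L)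
    (x : Fin τ × Fin N → ℂ) :
    (Bmat τ (a k)).mulVec ((Pmat N φ).mulVec x)
        = (Pmat N φ).mulVec ((Bmat τ (a k)).mulVec x) ∧
    Cmat a σ σr k ((Pmat N φ).mulVec x) = Pmat N φ * Cmat a σ σr k x * (Pmat N φ)ᴴ ∧
    fSINR a σ σr k ((Pmat N φ).mulVec x) = fSINR a σ σr k x := by
  have hB : ∀ i : Fin L, (Bmat τ (a i)).mulVec ((Pmat N φ).mulVec x)
      = (Pmat N φ).mulVec ((Bmat τ (a i)).mulVec x) := by
    intro i
    rw [Matrix.mulVec_mulVec, Matrix.mulVec_mulVec, BPcomm]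
  have hC : Cmat a σ σr k ((Pmat N φ).mulVec x)
      = Pmat N φ * Cmat a σ σr k x * (Pmat N φ)ᴴ := by
    unfold Cmat
    simp only [hB]
    simp only [Matrix.mul_add, Matrix.add_mul, Matrix.mul_sum, Matrix.sum_mul,
      Matrix.mul_smul, Matrix.smul_mul, Matrix.mul_one, PPH]
    congr 1
    exact Finset.sum_congr rfl fun i _ => by rw [PvecMulVec]
  refine ⟨hB k, hC, ?_⟩
  unfold fSINR
  congr 1
  have hinv : (Pmat N φ * Cmat a σ σr k x * (Pmat N φ)ᴴ)⁻¹
      = Pmat N φ * (Cmat a σ σr k x)⁻¹ * (Pmat N φ)ᴴ := by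
    rw [Matrix.mul_inv_rev, Matrix.mul_inv_rev, PHinv, Pinv, Matrix.mul_assoc]
  rw [hB k, hC, hinv, keyquad _ _ (PHP N φ)]

end
end

section
/- The Euclidean gradient of f(x) = σ² x^H B^H C(x)^{-1} B x with C(x) = Σ_{i∈S} σ_i² B_i x x^H B_i^H + σ_r² I, taken as ∂f/∂x^H (Wirtinger derivative with respect to the conjugate), equals σ² (B^H − Σ_{i∈S} σ_i² (x^H B^H C(x)^{-1} B_i x) B_i^H) C(x)^{-1} B x. -/
open Matrix BigOperators ComplexOrder

noncomputable section

/-! ### Auxiliary lemmas in the `L∞`-operator-norm world -/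

section AuxLinfty

attribute [local instance] Matrix.linftyOpNormedRing Matrix.linftyOpNormedAlgebra

theorem auxStmt10_inv_hasDerivAt {n : ℕ} {C : ℝ → Matrix (Fin n) (Fin n) ℂ}
    {D : Matrix (Fin n) (Fin n) ℂ} {t₀ : ℝ} (hC : HasDerivAt C D t₀)
    (hu : ∀ t, IsUnit (C t)) :
    HasDerivAt (fun t => (C t)⁻¹) (-((C t₀)⁻¹ * D * (C t₀)⁻¹)) t₀ := by
  have h1 : (fun t => (C t)⁻¹) = fun t => Ring.inverse (C t) := by
    funext t; exact Matrix.nonsing_inv_eq_ringInverse _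
  have h2 := (hasFDerivAt_ringInverse (𝕜 := ℝ) (hu t₀).unit).comp_hasDerivAt t₀ hC
  rw [h1]
  refine h2.congr_deriv ?_
  have h3 : ((hu t₀).unit⁻¹ : Matrix (Fin n) (Fin n) ℂ) = (C t₀)⁻¹ := by
    rw [Matrix.nonsing_inv_eq_ringInverse, IsUnit.unit_spec]
    exact (Matrix.nonsing_inv_eq_ringInverse _).symm
  simp [ContinuousLinearMap.mulLeftRight_apply, h3, mul_assoc]

theorem auxStmt10_transfer {n : ℕ} (f : ℝ → Matrix (Fin n) (Fin n) ℂ)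
    (d : Matrix (Fin n) (Fin n) ℂ) (t₀ : ℝ) :
    HasDerivAt f d t₀ ↔
      @HasDerivAt ℝ _ _ (Matrix.normedAddCommGroup (m := Fin n) (n := Fin n) (α := ℂ)).toAddCommGroup
        (Matrix.normedSpace (m := Fin n) (n := Fin n) (α := ℂ) (R := ℝ)).toModule
        (Matrix.normedAddCommGroup (m := Fin n) (n := Fin n) (α := ℂ)).toMetricSpace.toUniformSpace.toTopologicalSpace _ f d t₀ := by
  exact Iff.rfl

end AuxLinfty

attribute [local instance] Matrix.normedAddCommGroup Matrix.normedSpace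

/-- `C(x) = Σ_{i∈S} σ_i² B_i x x^H B_i^H + σ_r² I`. -/
def Cx {n : ℕ} {ι : Type*} [Fintype ι] (Bi : ι → Matrix (Fin n) (Fin n) ℂ)
    (σi : ι → ℝ) (σr : ℝ) (x : Fin n → ℂ) : Matrix (Fin n) (Fin n) ℂ :=
  (∑ i, ((σi i : ℂ) ^ 2) • vecMulVec ((Bi i).mulVec x) (star ((Bi i).mulVec x)))
    + ((σr : ℂ) ^ 2) • 1

/-- The SINR metric `f(x) = σ² x^H B^H C(x)⁻¹ B x` (real-valued). -/
def fS {n : ℕ} {ι : Type*} [Fintype ι] (B : Matrix (Fin n) (Fin n) ℂ)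
    (Bi : ι → Matrix (Fin n) (Fin n) ℂ) (σ : ℝ) (σi : ι → ℝ) (σr : ℝ)
    (x : Fin n → ℂ) : ℝ :=
  σ ^ 2 * (star (B.mulVec x) ⬝ᵥ (Cx Bi σi σr x)⁻¹.mulVec (B.mulVec x)).re

/-- The claimed Euclidean (Wirtinger) gradient `∂f/∂x^H` of Lemma 1:
`g(x) = σ² (B^H − Σ_i σ_i² (x^H B^H C(x)⁻¹ B_i x) B_i^H) C(x)⁻¹ B x`. -/
def gS {n : ℕ} {ι : Type*} [Fintype ι] (B : Matrix (Fin n) (Fin n) ℂ)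
    (Bi : ι → Matrix (Fin n) (Fin n) ℂ) (σ : ℝ) (σi : ι → ℝ) (σr : ℝ)
    (x : Fin n → ℂ) : Fin n → ℂ :=
  ((σ : ℂ) ^ 2) •
    ((Bᴴ - ∑ i, ((σi i : ℂ) ^ 2 *
        (star x ⬝ᵥ (Bᴴ * (Cx Bi σi σr x)⁻¹ * Bi i).mulVec x)) • (Bi i)ᴴ)
      * (Cx Bi σi σr x)⁻¹).mulVec (B.mulVec x)

/-! ### Auxiliary algebraic lemmas -/

theorem auxStmt10_star_form {n : ℕ} (M : Matrix (Fin n) (Fin n) ℂ) (a b : Fin n → ℂ) :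
    star (star a ⬝ᵥ M.mulVec b) = star b ⬝ᵥ Mᴴ.mulVec a := by
  rw [star_dotProduct, star_star, Matrix.star_mulVec, ← Matrix.dotProduct_mulVec]

theorem auxStmt10_vecMulVec_mulVec {n : ℕ} (c d p : Fin n → ℂ) :
    (vecMulVec c d).mulVec p = (d ⬝ᵥ p) • c := by
  funext k
  simp [Matrix.mulVec, Matrix.vecMulVec_apply, dotProduct, Finset.mul_sum]
  rw [Finset.sum_mul]
  exact Finset.sum_congr rfl fun i _ => by ring

theorem auxStmt10_sum_mulVec {n : ℕ} {ι : Type*} [Fintype ι]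
    (M : ι → Matrix (Fin n) (Fin n) ℂ) (p : Fin n → ℂ) :
    (∑ i, M i).mulVec p = ∑ i, (M i).mulVec p := by
  funext k
  simp [Matrix.mulVec, dotProduct, Matrix.sum_apply, Finset.sum_mul]
  rw [Finset.sum_comm]

theorem auxStmt10_mulVec_sum {n : ℕ} {ι : Type*} [Fintype ι]
    (M : Matrix (Fin n) (Fin n) ℂ) (p : ι → Fin n → ℂ) :
    M.mulVec (∑ i, p i) = ∑ i, M.mulVec (p i) := by
  funext k
  simp [Matrix.mulVec, dotProduct, Finset.mul_sum]
  rw [Finset.sum_comm]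

theorem auxStmt10_dotProduct_sum {n : ℕ} {ι : Type*} [Fintype ι]
    (u : Fin n → ℂ) (p : ι → Fin n → ℂ) :
    u ⬝ᵥ (∑ i, p i) = ∑ i, u ⬝ᵥ p i := by
  simp [dotProduct, Finset.sum_apply, Finset.mul_sum]
  rw [Finset.sum_comm]

theorem auxStmt10_star_real {r : ℝ} : star ((r : ℂ) ^ 2) = (r : ℂ) ^ 2 := by
  rw [← Complex.ofReal_pow]; exact Complex.conj_ofReal _

/-- Componentwise derivative of `mulVec` along a curve. -/
theorem auxStmt10_mulVec_deriv {n : ℕ} {x : ℝ → Fin n → ℂ} {v : Fin n → ℂ} {t₀ : ℝ}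
    (hx : HasDerivAt x v t₀) (M : Matrix (Fin n) (Fin n) ℂ) (k : Fin n) :
    HasDerivAt (fun t => M.mulVec (x t) k) (M.mulVec v k) t₀ := by
  simp only [Matrix.mulVec, dotProduct]
  exact HasDerivAt.fun_sum fun m _ => ((hasDerivAt_pi.mp hx) m).const_mul (M k m)

/-- Derivative of a sesquilinear form along curves, componentwise hypotheses. -/
theorem auxStmt10_sesq_deriv {n : ℕ} {a b : ℝ → Fin n → ℂ} {M : ℝ → Matrix (Fin n) (Fin n) ℂ}
    {a' b' : Fin n → ℂ} {M' : Matrix (Fin n) (Fin n) ℂ} {t₀ : ℝ}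
    (ha : ∀ k, HasDerivAt (fun t => a t k) (a' k) t₀)
    (hb : ∀ k, HasDerivAt (fun t => b t k) (b' k) t₀)
    (hM : ∀ k l, HasDerivAt (fun t => M t k l) (M' k l) t₀) :
    HasDerivAt (fun t => star (a t) ⬝ᵥ (M t).mulVec (b t))
      (star a' ⬝ᵥ (M t₀).mulVec (b t₀) + star (a t₀) ⬝ᵥ M'.mulVec (b t₀)
        + star (a t₀) ⬝ᵥ (M t₀).mulVec b') t₀ := by
  have key : ∀ k, HasDerivAt (fun t => star (a t k) * ((M t).mulVec (b t) k))
      (star (a' k) * ((M t₀).mulVec (b t₀) k)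
        + star (a t₀ k) * (M'.mulVec (b t₀) k + (M t₀).mulVec b' k)) t₀ := by
    intro k
    have hinner : HasDerivAt (fun t => (M t).mulVec (b t) k)
        (M'.mulVec (b t₀) k + (M t₀).mulVec b' k) t₀ := by
      simp only [Matrix.mulVec, dotProduct]
      have : ∀ l ∈ Finset.univ, HasDerivAt (fun t => M t k l * b t l)
          (M' k l * b t₀ l + M t₀ k l * b' l) t₀ :=
        fun l _ => (hM k l).mul (hb l)
      simpa [Finset.sum_add_distrib] using HasDerivAt.fun_sum this
    exact ((ha k).star).mul hinner
  have := HasDerivAt.fun_sum (fun k (_ : k ∈ Finset.univ) => key k)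
  refine this.congr_deriv ?_
  simp only [dotProduct, Pi.star_apply, Finset.sum_add_distrib, mul_add]
  ring

/-- Lemma 1: the Wirtinger gradient of the SINR metric.  Since `f` is real-valued, the identity
`df = (dx^H)(∂f/∂x^H) + (∂f/∂x)dx` with `∂f/∂x = (∂f/∂x^H)^H` is equivalent to the statement
that along every differentiable curve `x(t)` with velocity `v`,
`d/dt f(x(t)) = 2 Re(g(x(t))^H v)` where `g = ∂f/∂x^H` is the expression above. -/
theorem stmt_10 (n : ℕ) (ι : Type*) [Fintype ι] (B : Matrix (Fin n) (Fin n) ℂ)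
    (Bi : ι → Matrix (Fin n) (Fin n) ℂ) (σ : ℝ) (σi : ι → ℝ) (σr : ℝ)
    (hσ : 0 < σ) (hσi : ∀ i, 0 < σi i) (hσr : 0 < σr)
    (hC : ∀ x : Fin n → ℂ, (Cx Bi σi σr x).PosDef)
    (x : ℝ → (Fin n → ℂ)) (v : Fin n → ℂ) (t₀ : ℝ) (hx : HasDerivAt x v t₀) :
    HasDerivAt (fun t => fS B Bi σ σi σr (x t))
      (2 * (star (gS B Bi σ σi σr (x t₀)) ⬝ᵥ v).re) t₀ := by
  classical
  set x₀ : Fin n → ℂ := x t₀ with hx₀def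
  set u : Fin n → ℂ := B.mulVec x₀ with hudef
  set w : Fin n → ℂ := B.mulVec v with hwdef
  set a : ι → Fin n → ℂ := fun i => (Bi i).mulVec x₀ with hadef
  set b : ι → Fin n → ℂ := fun i => (Bi i).mulVec v with hbdef
  set N : Matrix (Fin n) (Fin n) ℂ := (Cx Bi σi σr x₀)⁻¹ with hNdef
  set Dm : Matrix (Fin n) (Fin n) ℂ :=
    ∑ i, ((σi i : ℂ) ^ 2) •
      (vecMulVec (b i) (star (a i)) + vecMulVec (a i) (star (b i))) with hDmdef
  have hNH : Nᴴ = N := (hC x₀).isHermitian.inv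
  -- derivative of C along the curve
  have hCd : HasDerivAt (fun t => Cx Bi σi σr (x t)) Dm t₀ := by
    apply hasDerivAt_pi.mpr; intro k; apply hasDerivAt_pi.mpr; intro l
    have hterm : ∀ i : ι, HasDerivAt
        (fun t => ((σi i : ℂ) ^ 2) * ((Bi i).mulVec (x t) k * star ((Bi i).mulVec (x t) l)))
        (((σi i : ℂ) ^ 2) * (b i k * star (a i l) + a i k * star (b i l))) t₀ := by
      intro i
      have h1 := auxStmt10_mulVec_deriv hx (Bi i) k
      have h2 := (auxStmt10_mulVec_deriv hx (Bi i) l).star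
      exact (h1.mul h2).const_mul _
    have hsum := HasDerivAt.sum (fun i (_ : i ∈ Finset.univ) => hterm i)
    have := hsum.add_const (((σr : ℂ) ^ 2) * (1 : Matrix (Fin n) (Fin n) ℂ) k l)
    convert this using 2 with t
    · simp [Cx, Matrix.add_apply, Matrix.sum_apply, Matrix.smul_apply,
        Matrix.vecMulVec_apply, Pi.star_apply, smul_eq_mul]
    · simp [hDmdef, Matrix.sum_apply, Matrix.smul_apply, Matrix.add_apply,
        Matrix.vecMulVec_apply, Pi.star_apply, smul_eq_mul, mul_add]
  have hu : ∀ t, IsUnit (Cx Bi σi σr (x t)) := fun t => (hC (x t)).isUnit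
  have hNd : HasDerivAt (fun t => (Cx Bi σi σr (x t))⁻¹) (-(N * Dm * N)) t₀ :=
    (auxStmt10_transfer _ _ _).mp
      (auxStmt10_inv_hasDerivAt ((auxStmt10_transfer _ _ _).mpr hCd) hu)
  -- derivative of the complex scalar form
  have hφ : HasDerivAt
      (fun t => star (B.mulVec (x t)) ⬝ᵥ (Cx Bi σi σr (x t))⁻¹.mulVec (B.mulVec (x t)))
      (star w ⬝ᵥ N.mulVec u + star u ⬝ᵥ (-(N * Dm * N)).mulVec u + star u ⬝ᵥ N.mulVec w)
      t₀ :=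
    auxStmt10_sesq_deriv (auxStmt10_mulVec_deriv hx B) (auxStmt10_mulVec_deriv hx B)
      (fun k l => hasDerivAt_pi.mp (hasDerivAt_pi.mp hNd k) l)
  set dφ : ℂ := star w ⬝ᵥ N.mulVec u + star u ⬝ᵥ (-(N * Dm * N)).mulVec u
      + star u ⬝ᵥ N.mulVec w with hdφdef
  have hre : HasDerivAt (fun t => fS B Bi σ σi σr (x t)) (σ ^ 2 * dφ.re) t₀ := by
    have h := (Complex.reCLM.hasFDerivAt.comp_hasDerivAt t₀ hφ).const_mul (σ ^ 2)
    simpa [fS] using h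
  -- algebraic identification of the derivative
  set S1 : ℂ := ∑ i, ((σi i : ℂ) ^ 2) *
      ((star (a i) ⬝ᵥ N.mulVec u) * (star u ⬝ᵥ N.mulVec (b i))) with hS1def
  set S2 : ℂ := ∑ i, ((σi i : ℂ) ^ 2) *
      ((star (b i) ⬝ᵥ N.mulVec u) * (star u ⬝ᵥ N.mulVec (a i))) with hS2def
  set z : ℂ := star u ⬝ᵥ N.mulVec w with hzdef
  have hstarS1 : star S1 = S2 := by
    rw [hS1def, hS2def, star_sum]
    refine Finset.sum_congr rfl fun i _ => ?_
    rw [star_mul', star_mul', auxStmt10_star_form, auxStmt10_star_form, hNH,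
      auxStmt10_star_real]
    ring
  have hT1 : star w ⬝ᵥ N.mulVec u = star z := by
    rw [hzdef, auxStmt10_star_form, hNH]
  have hmid : star u ⬝ᵥ (-(N * Dm * N)).mulVec u = -(S1 + S2) := by
    have hDp : Dm.mulVec (N.mulVec u) = ∑ i, ((σi i : ℂ) ^ 2) •
        ((star (a i) ⬝ᵥ N.mulVec u) • b i + (star (b i) ⬝ᵥ N.mulVec u) • a i) := by
      rw [hDmdef, auxStmt10_sum_mulVec]
      refine Finset.sum_congr rfl fun i _ => ?_
      rw [Matrix.smul_mulVec, Matrix.add_mulVec, auxStmt10_vecMulVec_mulVec,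
        auxStmt10_vecMulVec_mulVec]
    rw [Matrix.neg_mulVec, dotProduct_neg, neg_inj, ← Matrix.mulVec_mulVec,
      ← Matrix.mulVec_mulVec, hDp, auxStmt10_mulVec_sum]
    have : ∀ i : ι, N.mulVec (((σi i : ℂ) ^ 2) •
        ((star (a i) ⬝ᵥ N.mulVec u) • b i + (star (b i) ⬝ᵥ N.mulVec u) • a i))
        = ((σi i : ℂ) ^ 2) • ((star (a i) ⬝ᵥ N.mulVec u) • N.mulVec (b i)
          + (star (b i) ⬝ᵥ N.mulVec u) • N.mulVec (a i)) := by
      intro i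
      rw [Matrix.mulVec_smul, Matrix.mulVec_add, Matrix.mulVec_smul, Matrix.mulVec_smul]
    simp only [this]
    rw [auxStmt10_dotProduct_sum, hS1def, hS2def, ← Finset.sum_add_distrib]
    refine Finset.sum_congr rfl fun i _ => ?_
    rw [dotProduct_smul, dotProduct_add, dotProduct_smul, dotProduct_smul]
    simp only [smul_eq_mul]
    ring
  set Gc : ℂ := star (gS B Bi σ σi σr x₀) ⬝ᵥ v with hGcdef
  have hG : Gc = (σ : ℂ) ^ 2 * (z - S1) := by
    have habs : ∀ (P M : Matrix (Fin n) (Fin n) ℂ) (y q : Fin n → ℂ),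
        star y ⬝ᵥ (Pᴴ * M).mulVec q = star (P.mulVec y) ⬝ᵥ M.mulVec q := by
      intro P M y q
      rw [← Matrix.mulVec_mulVec, Matrix.dotProduct_mulVec, ← Matrix.star_mulVec]
    have hstar_s : ∀ i : ι, star (((σi i : ℂ) ^ 2) *
        (star x₀ ⬝ᵥ (Bᴴ * N * Bi i).mulVec x₀))
        = ((σi i : ℂ) ^ 2) * (star (a i) ⬝ᵥ N.mulVec u) := by
      intro i
      rw [star_mul', auxStmt10_star_form, auxStmt10_star_real]
      congr 1
      rw [Matrix.conjTranspose_mul, Matrix.conjTranspose_mul,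
        Matrix.conjTranspose_conjTranspose, hNH, habs, ← Matrix.mulVec_mulVec]
    have hgs : gS B Bi σ σi σr x₀ = (σ : ℂ) ^ 2 •
        (((Bᴴ - ∑ i, (((σi i : ℂ) ^ 2) *
            (star x₀ ⬝ᵥ (Bᴴ * N * Bi i).mulVec x₀)) • (Bi i)ᴴ) * N).mulVec u) := rfl
    rw [hGcdef, hgs, star_smul, smul_dotProduct, auxStmt10_star_real, smul_eq_mul]
    congr 1
    rw [Matrix.star_mulVec, ← Matrix.dotProduct_mulVec, Matrix.conjTranspose_mul, hNH,
      Matrix.conjTranspose_sub, Matrix.conjTranspose_conjTranspose,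
      Matrix.conjTranspose_sum]
    simp only [Matrix.conjTranspose_smul, Matrix.conjTranspose_conjTranspose, hstar_s]
    rw [← Matrix.mulVec_mulVec, Matrix.sub_mulVec, auxStmt10_sum_mulVec]
    simp only [Matrix.smul_mulVec]
    rw [Matrix.mulVec_sub, auxStmt10_mulVec_sum, dotProduct_sub, auxStmt10_dotProduct_sum]
    simp only [Matrix.mulVec_smul, dotProduct_smul, smul_eq_mul]
    rw [hzdef, hS1def]
    congr 1
    refine Finset.sum_congr rfl fun i _ => by ring
  have hstarG : star Gc = (σ : ℂ) ^ 2 * (star z - S2) := by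
    rw [hG, star_mul', star_sub, hstarS1, auxStmt10_star_real]
  have hkey : ((σ : ℂ) ^ 2) * dφ = Gc + star Gc := by
    rw [hdφdef, hmid, hT1, hstarG, hG]
    ring
  have h := congrArg Complex.re hkey
  rw [← Complex.ofReal_pow, Complex.re_ofReal_mul] at h
  simp only [Complex.add_re, Complex.star_def, Complex.conj_re] at h
  have hre2 : 2 * Gc.re = σ ^ 2 * dφ.re := by rw [h]; ring
  rw [show (2 : ℝ) * (star (gS B Bi σ σi σr x₀) ⬝ᵥ v).re = 2 * Gc.re from rfl, hre2]
  exact hre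

end
end
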